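/- arXiv:1512.02496 — 2 statements merged into one kernel-verified Lean document; each statement's English description precedes it below -/
import Mathlib

section
/- Let G be a finite simple graph with minimum degree exactly 2 and average degree strictly less than 5/2, containing no triangle with two degree-2 vertices. Then G contains a (2,2,2)-path, a (2,2,3,2)-path, a (3;2,2,2)-star, or a 4-vertex adjacent to four 2-vertices at least three of which are followed by another 2-vertex. -/
open SimpleGraph Finset
set_option linter.unusedSectionVars false
set_option maxHeartbeats 1000000

section
variable {V : Type} [Fintype V] [DecidableEq V] (G : SimpleGraph V) [DecidableRel G.Adj]

def bad (v : V) : Prop := ∃ u ∈ G.neighborFinset v, G.degree u = 2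

instance : DecidablePred (bad G) := fun v =>
  decidable_of_iff (∃ u ∈ G.neighborFinset v, G.degree u = 2) Iff.rfl

def send (w v : V) : ℚ :=
  if G.degree v = 2 ∧ 3 ≤ G.degree w then (if bad G v then 1/2 else 1/4) else 0

lemma send_nonneg (w v : V) : 0 ≤ send G w v := by
  unfold send; split_ifs <;> norm_num

lemma swap_sum :
    ∑ w, ∑ v ∈ G.neighborFinset w, send G w v
      = ∑ v, ∑ w ∈ G.neighborFinset v, send G w v := by
  apply Finset.sum_comm'
  intro x y
  simp [mem_neighborFinset, adj_comm]

lemma send_formula {w : V} (hw : 3 ≤ G.degree w) (u : V) :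
    send G w u = (if G.degree u = 2 then (1:ℚ)/4 else 0)
      + (if G.degree u = 2 ∧ bad G u then (1:ℚ)/4 else 0) := by
  unfold send
  split_ifs <;> first | tauto | norm_num

lemma exists_three {α : Type*} [DecidableEq α] {s : Finset α} (h : 3 ≤ s.card) :
    ∃ a b c, a ∈ s ∧ b ∈ s ∧ c ∈ s ∧ a ≠ b ∧ a ≠ c ∧ b ≠ c := by
  obtain ⟨a, ha⟩ := Finset.card_pos.mp (by omega : 0 < s.card)
  have h1 : 2 ≤ (s.erase a).card := by
    have := Finset.card_erase_of_mem ha; omega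
  obtain ⟨b, hb⟩ := Finset.card_pos.mp (by omega : 0 < (s.erase a).card)
  have h2 : 1 ≤ ((s.erase a).erase b).card := by
    have := Finset.card_erase_of_mem hb; omega
  obtain ⟨c, hc⟩ := Finset.card_pos.mp (by omega : 0 < ((s.erase a).erase b).card)
  refine ⟨a, b, c, ha, Finset.mem_of_mem_erase hb,
    Finset.mem_of_mem_erase (Finset.mem_of_mem_erase hc), ?_, ?_, ?_⟩
  · exact (Finset.ne_of_mem_erase hb).symm
  · exact (Finset.ne_of_mem_erase (Finset.mem_of_mem_erase hc)).symm
  · exact (Finset.ne_of_mem_erase hc).symm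

lemma key_charge
    (hmin : ∀ v, 2 ≤ G.degree v)
    (htri : ¬ ∃ a b c : V, G.Adj a b ∧ G.Adj b c ∧ G.Adj a c ∧
      G.degree a = 2 ∧ G.degree b = 2)
    (h1 : ¬ (∃ v₁ v₂ v₃ : V, G.Adj v₁ v₂ ∧ G.Adj v₂ v₃ ∧ v₁ ≠ v₃ ∧
        G.degree v₁ = 2 ∧ G.degree v₂ = 2 ∧ G.degree v₃ = 2))
    (h2 : ¬ (∃ v₁ v₂ v₃ v₄ : V, G.Adj v₁ v₂ ∧ G.Adj v₂ v₃ ∧ G.Adj v₃ v₄ ∧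
        v₁ ≠ v₃ ∧ v₁ ≠ v₄ ∧ v₂ ≠ v₄ ∧
        G.degree v₁ = 2 ∧ G.degree v₂ = 2 ∧ G.degree v₃ = 3 ∧ G.degree v₄ = 2))
    (h3 : ¬ (∃ w a b c : V, G.Adj w a ∧ G.Adj w b ∧ G.Adj w c ∧
        a ≠ b ∧ a ≠ c ∧ b ≠ c ∧ G.degree w = 3 ∧
        G.degree a = 2 ∧ G.degree b = 2 ∧ G.degree c = 2))
    (h4 : ¬ (∃ w a b c d a' b' c' : V, G.Adj w a ∧ G.Adj w b ∧ G.Adj w c ∧ G.Adj w d ∧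
        a ≠ b ∧ a ≠ c ∧ a ≠ d ∧ b ≠ c ∧ b ≠ d ∧ c ≠ d ∧ G.degree w = 4 ∧
        G.degree a = 2 ∧ G.degree b = 2 ∧ G.degree c = 2 ∧ G.degree d = 2 ∧
        G.Adj a a' ∧ a' ≠ w ∧ G.degree a' = 2 ∧
        G.Adj b b' ∧ b' ≠ w ∧ G.degree b' = 2 ∧
        G.Adj c c' ∧ c' ≠ w ∧ G.degree c' = 2))
    (v : V) :
    (5:ℚ)/2 ≤ (G.degree v : ℚ)
      - (∑ u ∈ G.neighborFinset v, send G v u)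
      + (∑ w ∈ G.neighborFinset v, send G w v) := by
  rcases Nat.lt_or_ge (G.degree v) 3 with hd | hd3
  · -- degree 2 vertex
    have hv : G.degree v = 2 := le_antisymm (by omega) (hmin v)
    have hsent : ∑ u ∈ G.neighborFinset v, send G v u = 0 := by
      apply Finset.sum_eq_zero
      intro u _
      unfold send
      rw [if_neg]
      rintro ⟨-, h⟩; omega
    have hc2 : (G.neighborFinset v).card = 2 := by
      rw [card_neighborFinset_eq_degree]; exact hv
    obtain ⟨a, b, hab, hN⟩ := Finset.card_eq_two.mp hc2
    have haN : a ∈ G.neighborFinset v := by rw [hN]; simp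
    have hbN : b ∈ G.neighborFinset v := by rw [hN]; simp
    have hva : G.Adj v a := (mem_neighborFinset _ _ _).mp haN
    have hvb : G.Adj v b := (mem_neighborFinset _ _ _).mp hbN
    have hrecv : (1:ℚ)/2 ≤ ∑ w ∈ G.neighborFinset v, send G w v := by
      rw [hN, Finset.sum_pair hab]
      by_cases hbad : bad G v
      · obtain ⟨u, hu, hu2⟩ := id hbad
        have key : ∀ x y : V, x ∈ G.neighborFinset v → y ∈ G.neighborFinset v →
            x ≠ y → G.degree x = 2 → 3 ≤ G.degree y := by
          intro x y hx hy hxy hx2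
          rcases Nat.lt_or_ge (G.degree y) 3 with h' | h'
          · exfalso
            have hy2 : G.degree y = 2 := le_antisymm (by omega) (hmin y)
            exact h1 ⟨x, v, y, ((mem_neighborFinset _ _ _).mp hx).symm,
              (mem_neighborFinset _ _ _).mp hy, hxy, hx2, hv, hy2⟩
          · exact h'
        rw [hN] at hu
        rcases Finset.mem_insert.mp hu with hua | hu'
        · -- u = a, so deg b ≥ 3
          have hb3 : 3 ≤ G.degree b := key a b haN hbN hab (hua ▸ hu2)
          have : send G b v = 1/2 := by
            unfold send; rw [if_pos ⟨hv, hb3⟩, if_pos hbad]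
          rw [this]
          linarith [send_nonneg G a v]
        · have hub : u = b := Finset.mem_singleton.mp hu'
          have ha3 : 3 ≤ G.degree a := key b a hbN haN hab.symm (hub ▸ hu2)
          have : send G a v = 1/2 := by
            unfold send; rw [if_pos ⟨hv, ha3⟩, if_pos hbad]
          rw [this]
          linarith [send_nonneg G b v]
      · have h3deg : ∀ x : V, x ∈ G.neighborFinset v → 3 ≤ G.degree x := by
          intro x hx
          rcases Nat.lt_or_ge (G.degree x) 3 with h' | h'
          · exact absurd ⟨x, hx, le_antisymm (by omega) (hmin x)⟩ hbad
          · exact h'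
        have ea : send G a v = 1/4 := by
          unfold send; rw [if_pos ⟨hv, h3deg a haN⟩, if_neg hbad]
        have eb : send G b v = 1/4 := by
          unfold send; rw [if_pos ⟨hv, h3deg b hbN⟩, if_neg hbad]
        rw [ea, eb]; norm_num
    rw [hv, hsent]
    push_cast
    linarith
  · -- degree ≥ 3 vertex
    have hrecv : 0 ≤ ∑ w ∈ G.neighborFinset v, send G w v :=
      Finset.sum_nonneg fun w _ => send_nonneg G w v
    set T := (G.neighborFinset v).filter (fun u => G.degree u = 2) with hTdef
    set B := (G.neighborFinset v).filter (fun u => G.degree u = 2 ∧ bad G u) with hBdef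
    have hformula : ∑ u ∈ G.neighborFinset v, send G v u
        = (T.card : ℚ)/4 + (B.card : ℚ)/4 := by
      rw [Finset.sum_congr rfl (fun u _ => send_formula G hd3 u),
        Finset.sum_add_distrib, ← Finset.sum_filter, ← Finset.sum_filter,
        Finset.sum_const, Finset.sum_const]
      push_cast
      ring
    have hBT : B ⊆ T := by
      intro x hx
      rw [hBdef, Finset.mem_filter] at hx
      rw [hTdef, Finset.mem_filter]
      exact ⟨hx.1, hx.2.1⟩
    have hBTc : B.card ≤ T.card := Finset.card_le_card hBT
    have hTd : T.card ≤ G.degree v := by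
      calc T.card ≤ (G.neighborFinset v).card := Finset.card_filter_le _ _
        _ = G.degree v := card_neighborFinset_eq_degree G v
    have hmemT : ∀ x, x ∈ T → G.Adj v x ∧ G.degree x = 2 := by
      intro x hx
      rw [hTdef, Finset.mem_filter, mem_neighborFinset] at hx
      exact hx
    have hmemB : ∀ x, x ∈ B → G.Adj v x ∧ G.degree x = 2 ∧ bad G x := by
      intro x hx
      rw [hBdef, Finset.mem_filter, mem_neighborFinset] at hx
      exact ⟨hx.1, hx.2⟩
    have hcard : T.card + B.card + 10 ≤ 4 * G.degree v := by
      rcases Nat.lt_or_ge (G.degree v) 5 with h5 | h5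
      · have hd34 : G.degree v = 3 ∨ G.degree v = 4 := by omega
        rcases hd34 with hdv | hdv
        · -- degree 3 : T.card + B.card ≤ 2
          have hstar : T.card ≤ 2 := by
            by_contra hc
            obtain ⟨a, b, c, ha, hb, hc', hab, hac, hbc⟩ :=
              exists_three (s := T) (by omega)
            exact h3 ⟨v, a, b, c, (hmemT a ha).1, (hmemT b hb).1, (hmemT c hc').1,
              hab, hac, hbc, hdv, (hmemT a ha).2, (hmemT b hb).2, (hmemT c hc').2⟩
          rcases Finset.eq_empty_or_nonempty B with hB | ⟨u, hu⟩
          · rw [hB]; simp; omega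
          · -- a bad 2-neighbor u forces T = {u}
            obtain ⟨hvu, hu2, u'', hu''N, hu''2⟩ := hmemB u hu
            have hT1 : T ⊆ {u} := by
              intro u' hu'
              rw [Finset.mem_singleton]
              by_contra hne
              obtain ⟨hvu', hu'2⟩ := hmemT u' hu'
              have huu'' : G.Adj u u'' := (mem_neighborFinset _ _ _).mp hu''N
              refine h2 ⟨u'', u, v, u', huu''.symm, hvu.symm, hvu', ?_, ?_,
                fun e => hne e.symm, hu''2, hu2, hdv, hu'2⟩
              · intro e; rw [e] at hu''2; omega
              · intro e
                exact htri ⟨u'', u, v, huu''.symm, hvu.symm, e ▸ hvu'.symm,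
                  hu''2, hu2⟩
            have := Finset.card_le_card hT1
            simp at this
            omega
        · -- degree 4 : T.card + B.card ≤ 6
          by_cases hT3 : T.card ≤ 3
          · omega
          · have hT4 : T.card = 4 := by omega
            have hB2 : B.card ≤ 2 := by
              by_contra hc
              obtain ⟨a, b, c, ha, hb, hc', hab, hac, hbc⟩ :=
                exists_three (s := B) (by omega)
              have habc : {a, b, c} ⊆ T := by
                intro x hx
                simp only [Finset.mem_insert, Finset.mem_singleton] at hx
                rcases hx with rfl | rfl | rfl
                exacts [hBT ha, hBT hb, hBT hc']
              have hcards : ({a, b, c} : Finset V).card = 3 := by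
                rw [Finset.card_insert_of_notMem (by simp [hab, hac]),
                  Finset.card_insert_of_notMem (by simp [hbc]),
                  Finset.card_singleton]
              have hsd : 0 < (T \ {a, b, c}).card := by
                rw [Finset.card_sdiff_of_subset habc]
                omega
              obtain ⟨d, hd⟩ := Finset.card_pos.mp hsd
              rw [Finset.mem_sdiff] at hd
              obtain ⟨hdT, hdnot⟩ := hd
              simp only [Finset.mem_insert, Finset.mem_singleton, not_or] at hdnot
              obtain ⟨hda, hdb, hdc⟩ := hdnot
              obtain ⟨hva, ha2, a', ha'N, ha'2⟩ := hmemB a ha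
              obtain ⟨hvb, hb2, b', hb'N, hb'2⟩ := hmemB b hb
              obtain ⟨hvc, hc2, c', hc'N, hc'2⟩ := hmemB c hc'
              refine h4 ⟨v, a, b, c, d, a', b', c', hva, hvb, hvc, (hmemT d hdT).1,
                hab, hac, fun e => hda e.symm, hbc, fun e => hdb e.symm,
                fun e => hdc e.symm, hdv, ha2, hb2, hc2, (hmemT d hdT).2,
                (mem_neighborFinset _ _ _).mp ha'N, ?_, ha'2,
                (mem_neighborFinset _ _ _).mp hb'N, ?_, hb'2,
                (mem_neighborFinset _ _ _).mp hc'N, ?_, hc'2⟩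
              · intro e; rw [e] at ha'2; omega
              · intro e; rw [e] at hb'2; omega
              · intro e; rw [e] at hc'2; omega
            omega
      · omega
    rw [hformula]
    have : (T.card : ℚ) + B.card + 10 ≤ 4 * G.degree v := by
      exact_mod_cast hcard
    linarith

end

open SimpleGraph

theorem stmt_11 {V : Type} [Fintype V] [DecidableEq V] (G : SimpleGraph V)
    [DecidableRel G.Adj]
    (hδ : (∀ v, 2 ≤ G.degree v) ∧ (∃ v, G.degree v = 2))
    (havg : (2 * G.edgeFinset.card : ℚ) / Fintype.card V < 5 / 2)
    (htri : ¬ ∃ a b c : V, G.Adj a b ∧ G.Adj b c ∧ G.Adj a c ∧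
      G.degree a = 2 ∧ G.degree b = 2) :
    -- a (2, 2, 2)-path
    (∃ v₁ v₂ v₃ : V, G.Adj v₁ v₂ ∧ G.Adj v₂ v₃ ∧ v₁ ≠ v₃ ∧
        G.degree v₁ = 2 ∧ G.degree v₂ = 2 ∧ G.degree v₃ = 2) ∨
    -- a (2, 2, 3, 2)-path
    (∃ v₁ v₂ v₃ v₄ : V, G.Adj v₁ v₂ ∧ G.Adj v₂ v₃ ∧ G.Adj v₃ v₄ ∧
        v₁ ≠ v₃ ∧ v₁ ≠ v₄ ∧ v₂ ≠ v₄ ∧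
        G.degree v₁ = 2 ∧ G.degree v₂ = 2 ∧ G.degree v₃ = 3 ∧ G.degree v₄ = 2) ∨
    -- a (3; 2, 2, 2)-star
    (∃ w a b c : V, G.Adj w a ∧ G.Adj w b ∧ G.Adj w c ∧
        a ≠ b ∧ a ≠ c ∧ b ≠ c ∧ G.degree w = 3 ∧
        G.degree a = 2 ∧ G.degree b = 2 ∧ G.degree c = 2) ∨
    -- configuration (c): a 4-vertex adjacent to four 2-vertices, at least three
    -- of which are followed by a further 2-vertex
    (∃ w a b c d a' b' c' : V, G.Adj w a ∧ G.Adj w b ∧ G.Adj w c ∧ G.Adj w d ∧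
        a ≠ b ∧ a ≠ c ∧ a ≠ d ∧ b ≠ c ∧ b ≠ d ∧ c ≠ d ∧ G.degree w = 4 ∧
        G.degree a = 2 ∧ G.degree b = 2 ∧ G.degree c = 2 ∧ G.degree d = 2 ∧
        G.Adj a a' ∧ a' ≠ w ∧ G.degree a' = 2 ∧
        G.Adj b b' ∧ b' ≠ w ∧ G.degree b' = 2 ∧
        G.Adj c c' ∧ c' ≠ w ∧ G.degree c' = 2) := by
  by_contra hcon
  rw [not_or, not_or, not_or] at hcon
  obtain ⟨h1, h2, h3, h4⟩ := hcon
  obtain ⟨hmin, v0, hv0⟩ := hδ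
  have key := key_charge G hmin htri h1 h2 h3 h4
  have hsum : ∑ v : V, ((5:ℚ)/2)
      ≤ ∑ v : V, ((G.degree v : ℚ)
        - (∑ u ∈ G.neighborFinset v, send G v u)
        + (∑ w ∈ G.neighborFinset v, send G w v)) :=
    Finset.sum_le_sum fun v _ => key v
  rw [Finset.sum_add_distrib, Finset.sum_sub_distrib, swap_sum] at hsum
  have hdeg : ∑ v : V, (G.degree v : ℚ) = 2 * G.edgeFinset.card := by
    have := G.sum_degrees_eq_twice_card_edges
    exact_mod_cast congrArg (Nat.cast : ℕ → ℚ) this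
  have hconst : ∑ v : V, ((5:ℚ)/2) = (Fintype.card V : ℚ) * (5/2) := by
    rw [Finset.sum_const, Finset.card_univ, nsmul_eq_mul]
  have hpos : 0 < (Fintype.card V : ℚ) := by
    have : 0 < Fintype.card V := Fintype.card_pos_iff.mpr ⟨v0⟩
    exact_mod_cast this
  rw [div_lt_iff₀ hpos] at havg
  rw [hconst, hdeg] at hsum
  linarith
end

section
/- Let G be a normal plane map (plane multigraph with minimum degree at least 3 and every face of size at least 3) with girth at least 5. Then G contains a path on three vertices each of degree exactly 3. -/
open SimpleGraph

/-- A combinatorial (oriented, 2-cell) embedding of a simple graph, given by a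
rotation-style successor permutation on darts whose cycles are exactly the sets
of darts leaving a common vertex.  Faces are the cycles of the permutation
`d ↦ next d.symm`. -/
structure PlaneEmbedding {V : Type} (G : SimpleGraph V) where
  next : Equiv.Perm G.Dart
  next_fst : ∀ d : G.Dart, (next d).fst = d.fst
  cycle_of_fst : ∀ d d' : G.Dart, d.fst = d'.fst → next.SameCycle d d'

namespace PlaneEmbedding

variable {V : Type} {G : SimpleGraph V} (E : PlaneEmbedding G)

/-- The face permutation on darts. -/
def facePerm : Equiv.Perm G.Dart :=
  (Function.Involutive.toPerm Dart.symm fun d => Dart.symm_symm d).trans E.next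

/-- The setoid on darts identifying darts lying on the same face. -/
def faceSetoid : Setoid G.Dart :=
  ⟨E.facePerm.SameCycle, ⟨fun _ => Equiv.Perm.SameCycle.refl _ _,
    Equiv.Perm.SameCycle.symm, Equiv.Perm.SameCycle.trans⟩⟩

/-- The number of faces of the embedding. -/
noncomputable def faceCount : ℕ := Nat.card (Quotient E.faceSetoid)

/-- The size (degree) of the face containing the dart `d`. -/
noncomputable def faceSize (d : G.Dart) : ℕ :=
  Nat.card {d' : G.Dart // E.facePerm.SameCycle d d'}

/-- Euler's formula `|V| - |E| + |F| = 2`: the embedding is in the plane. -/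
def EulerFormula : Prop :=
  (Nat.card V : ℤ) - Nat.card G.edgeSet + E.faceCount = 2

lemma facePerm_fst (d : G.Dart) : (E.facePerm d).fst = d.snd := by
  show (E.next d.symm).fst = d.snd
  rw [E.next_fst]; rfl

lemma facePerm_ne (d : G.Dart) : E.facePerm d ≠ d := by
  intro h
  have h2 : (E.facePerm d).fst = d.fst := by rw [h]
  rw [E.facePerm_fst] at h2
  exact d.adj.ne h2.symm

lemma facePerm_ne_symm [Fintype V] [DecidableRel G.Adj]
    (hδ : ∀ v, 2 ≤ G.degree v) (d : G.Dart) : E.facePerm d ≠ d.symm := by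
  intro h
  have hfix : E.next d.symm = d.symm := h
  have h2 : 1 < (G.neighborFinset d.snd).card := by
    have := hδ d.snd; rw [← G.card_neighborFinset_eq_degree] at this; omega
  obtain ⟨a, ha, b, hb, hab⟩ := Finset.one_lt_card.mp h2
  rw [mem_neighborFinset] at ha hb
  set da : G.Dart := ⟨(d.snd, a), ha⟩
  set db : G.Dart := ⟨(d.snd, b), hb⟩
  obtain ⟨i, hi⟩ := E.cycle_of_fst d.symm da rfl
  obtain ⟨j, hj⟩ := E.cycle_of_fst d.symm db rfl
  rw [Equiv.Perm.zpow_apply_eq_self_of_apply_eq_self hfix] at hi hj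
  have : da = db := hi ▸ hj
  exact hab (congrArg (fun e : G.Dart => e.snd) this)

lemma facePerm_pow_faceSize [Fintype V] [DecidableEq V] [DecidableRel G.Adj] (d : G.Dart) :
    (E.facePerm ^ E.faceSize d) d = d := by
  have hsupp : ∀ e : G.Dart, e ∈ E.facePerm.support := fun e =>
    Equiv.Perm.mem_support.mpr (E.facePerm_ne e)
  have hcard : E.faceSize d = (E.facePerm.cycleOf d).support.card := by
    rw [faceSize, ← Nat.card_eq_finsetCard]
    exact Nat.card_congr (Equiv.subtypeEquivRight fun e => by
      rw [Equiv.Perm.mem_support_cycleOf_iff]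
      exact ⟨fun h => ⟨h, hsupp d⟩, fun h => h.1⟩)
  have := Equiv.Perm.pow_mod_card_support_cycleOf_self_apply E.facePerm (E.faceSize d) d
  rw [hcard, Nat.mod_self, pow_zero] at this
  rw [hcard, ← this]; rfl

lemma triangle_isCycle' {a b c : V}
    (h1 : G.Adj a b) (h2 : G.Adj b c) (h3 : G.Adj c a) :
    (Walk.cons h1 (Walk.cons h2 (Walk.cons h3 Walk.nil)) : G.Walk a a).IsCycle := by
  simp [Walk.isCycle_def, Walk.isTrail_def, List.Nodup, Sym2.eq_iff]
  constructor <;> aesop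

lemma square_isCycle' {a b c d : V}
    (h1 : G.Adj a b) (h2 : G.Adj b c) (h3 : G.Adj c d) (h4 : G.Adj d a)
    (hac : a ≠ c) (hbd : b ≠ d) :
    (Walk.cons h1 (Walk.cons h2 (Walk.cons h3 (Walk.cons h4 Walk.nil))) : G.Walk a a).IsCycle := by
  simp [Walk.isCycle_def, Walk.isTrail_def, List.Nodup, Sym2.eq_iff]
  constructor <;> aesop

lemma faceSize_ge_five [Fintype V] [DecidableEq V] [DecidableRel G.Adj]
    (hδ : ∀ v, 3 ≤ G.degree v) (hgirth : 5 ≤ G.egirth) {d : G.Dart}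
    (hface : 3 ≤ E.faceSize d) : 5 ≤ E.faceSize d := by
  have hδ2 : ∀ v, 2 ≤ G.degree v := fun v => le_trans (by norm_num) (hδ v)
  by_contra hlt
  push_neg at hlt
  set f := E.facePerm
  set d1 := f d with hd1
  set d2 := f d1 with hd2
  set d3 := f d2 with hd3
  have h1f : d1.fst = d.snd := E.facePerm_fst d
  have h2f : d2.fst = d1.snd := E.facePerm_fst d1
  have h3f : d3.fst = d2.snd := E.facePerm_fst d2
  interval_cases h : E.faceSize d
  · have hp : f (f (f d)) = d := by
      have := E.facePerm_pow_faceSize d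
      rw [h] at this
      simpa [pow_succ, Equiv.Perm.mul_apply] using this
    have hlast : d2.snd = d.fst := by
      have : (f d2).fst = d2.snd := E.facePerm_fst d2
      rw [show f d2 = d from hp] at this
      exact this.symm
    have w := triangle_isCycle' d.adj (h1f ▸ d1.adj) (h2f ▸ hlast ▸ d2.adj)
    exact absurd (SimpleGraph.le_egirth.mp hgirth _ _ w) (by norm_num)
  · have hp : f (f (f (f d))) = d := by
      have := E.facePerm_pow_faceSize d
      rw [h] at this
      simpa [pow_succ, Equiv.Perm.mul_apply] using this
    have hlast : d3.snd = d.fst := by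
      have : (f d3).fst = d3.snd := E.facePerm_fst d3
      rw [show f d3 = d from hp] at this
      exact this.symm
    have hac : d.fst ≠ d1.snd := by
      intro hEq
      apply E.facePerm_ne_symm hδ2 d
      exact Dart.ext _ _ (Prod.ext h1f hEq.symm)
    have hbd : d.snd ≠ d2.snd := by
      intro hEq
      apply E.facePerm_ne_symm hδ2 d1
      exact Dart.ext _ _ (Prod.ext h2f (hEq.symm.trans h1f.symm))
    have w := square_isCycle' d.adj (h1f ▸ d1.adj) (h2f ▸ d2.adj) (h3f ▸ hlast ▸ d3.adj) hac hbd
    exact absurd (SimpleGraph.le_egirth.mp hgirth _ _ w) (by norm_num)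

/-- If every face has size at least 5 then `5 * faceCount ≤ #darts`. -/
lemma five_mul_faceCount_le [Fintype V] [DecidableEq V] [DecidableRel G.Adj]
    (h5 : ∀ d : G.Dart, 5 ≤ E.faceSize d) :
    5 * E.faceCount ≤ Fintype.card G.Dart := by
  classical
  haveI : Fintype (Quotient E.faceSetoid) :=
    Fintype.ofSurjective (Quotient.mk E.faceSetoid) fun q => Quotient.exists_rep q
  have hcount : E.faceCount = Fintype.card (Quotient E.faceSetoid) := Nat.card_eq_fintype_card
  have hfib : Fintype.card G.Dart =
      ∑ q : Quotient E.faceSetoid,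
        (Finset.univ.filter (fun d : G.Dart => Quotient.mk E.faceSetoid d = q)).card := by
    rw [← Finset.card_univ]
    exact Finset.card_eq_sum_card_fiberwise fun x _ => Finset.mem_univ _
  have hge : ∀ q : Quotient E.faceSetoid,
      5 ≤ (Finset.univ.filter (fun d : G.Dart => Quotient.mk E.faceSetoid d = q)).card := by
    intro q
    obtain ⟨d₀, rfl⟩ := Quotient.exists_rep q
    refine le_trans (h5 d₀) ?_
    have : E.faceSize d₀ =
        (Finset.univ.filter (fun d : G.Dart => E.facePerm.SameCycle d₀ d)).card := by
      rw [faceSize, Nat.card_eq_fintype_card, Fintype.card_subtype]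
    rw [this]
    apply Finset.card_le_card
    intro d hd
    rw [Finset.mem_filter] at hd ⊢
    exact ⟨Finset.mem_univ _, Quotient.sound hd.2.symm⟩
  calc 5 * E.faceCount = ∑ _q : Quotient E.faceSetoid, 5 := by
        rw [hcount, Finset.sum_const, Finset.card_univ, mul_comm]; rfl
    _ ≤ _ := by rw [hfib]; exact Finset.sum_le_sum fun q _ => hge q
end PlaneEmbedding

/-- A normal plane map: a connected plane graph with all vertex degrees at least 3
and all face sizes at least 3. -/
theorem stmt_15 {V : Type} [Fintype V] [DecidableEq V] (G : SimpleGraph V)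
    [DecidableRel G.Adj]
    (hconn : G.Connected)
    (hδ : ∀ v, 3 ≤ G.degree v)
    (E : PlaneEmbedding G) (hE : E.EulerFormula)
    (hface : ∀ d : G.Dart, 3 ≤ E.faceSize d)
    (hgirth : 5 ≤ G.egirth) :
    ∃ v₁ v₂ v₃ : V, G.Adj v₁ v₂ ∧ G.Adj v₂ v₃ ∧ v₁ ≠ v₃ ∧
      G.degree v₁ = 3 ∧ G.degree v₂ = 3 ∧ G.degree v₃ = 3 := by
  classical
  by_contra hno
  push_neg at hno
  -- notation
  set m := G.edgeFinset.card with hm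
  set A : Finset V := Finset.univ.filter (fun v => G.degree v = 3) with hA
  set B : Finset V := Aᶜ with hB
  set S := ∑ w ∈ B, G.degree w with hS
  -- each degree-3 vertex has at least 2 neighbors of degree ≥ 4
  have key1 : ∀ v ∈ A, 2 ≤ (B.filter (fun w => G.Adj v w)).card := by
    intro v hv
    rw [hA, Finset.mem_filter] at hv
    have hdv : G.degree v = 3 := hv.2
    have hsplit : ((G.neighborFinset v).filter (fun w => w ∈ A)).card +
        ((G.neighborFinset v).filter (fun w => w ∉ A)).card = 3 := by
      rw [Finset.card_filter_add_card_filter_not, G.card_neighborFinset_eq_degree, hdv]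
    have hle1 : ((G.neighborFinset v).filter (fun w => w ∈ A)).card ≤ 1 := by
      by_contra hc
      push_neg at hc
      obtain ⟨x, hx, y, hy, hxy⟩ := Finset.one_lt_card.mp hc
      rw [Finset.mem_filter, mem_neighborFinset] at hx hy
      have hxA := hx.2; have hyA := hy.2
      rw [hA, Finset.mem_filter] at hxA hyA
      exact hno x v y hx.1.symm hy.1 hxy hxA.2 hdv hyA.2
    have heq : B.filter (fun w => G.Adj v w) =
        (G.neighborFinset v).filter (fun w => w ∉ A) := by
      ext w
      simp only [Finset.mem_filter, hB, Finset.mem_compl, mem_neighborFinset]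
      tauto
    rw [heq]; omega
  -- double counting edges between A and B
  have key2 : ∑ v ∈ A, (B.filter (fun w => G.Adj v w)).card =
      ∑ w ∈ B, (A.filter (fun v => G.Adj w v)).card := by
    simp only [Finset.card_filter]
    rw [Finset.sum_comm]
    apply Finset.sum_congr rfl
    intro w _
    apply Finset.sum_congr rfl
    intro v _
    simp [adj_comm]
  have key3 : ∀ w, (A.filter (fun v => G.Adj w v)).card ≤ G.degree w := by
    intro w
    rw [← G.card_neighborFinset_eq_degree]
    apply Finset.card_le_card
    intro v hv
    rw [Finset.mem_filter] at hv
    rw [mem_neighborFinset]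
    exact hv.2
  have h2a : 2 * A.card ≤ S := by
    calc 2 * A.card = ∑ _v ∈ A, 2 := by rw [Finset.sum_const, mul_comm]; rfl
      _ ≤ ∑ v ∈ A, (B.filter (fun w => G.Adj v w)).card := Finset.sum_le_sum key1
      _ = ∑ w ∈ B, (A.filter (fun v => G.Adj w v)).card := key2
      _ ≤ S := Finset.sum_le_sum fun w _ => key3 w
  have h4b : 4 * B.card ≤ S := by
    calc 4 * B.card = ∑ _w ∈ B, 4 := by rw [Finset.sum_const, mul_comm]; rfl
      _ ≤ S := by
          apply Finset.sum_le_sum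
          intro w hw
          rw [hB, Finset.mem_compl, hA, Finset.mem_filter] at hw
          have := hδ w
          have : G.degree w ≠ 3 := fun h => hw ⟨Finset.mem_univ _, h⟩
          omega
  have hdegsum : 3 * A.card + S = 2 * m := by
    have := G.sum_degrees_eq_twice_card_edges
    rw [← this, ← Finset.sum_filter_add_sum_filter_not Finset.univ (fun v => G.degree v = 3)]
    congr 1
    · rw [Finset.sum_congr rfl (fun v hv => (Finset.mem_filter.mp hv).2), Finset.sum_const,
        mul_comm, ← hA]
      rfl
    · rw [hS, hB, hA]
      congr 1
      ext w
      simp [Finset.mem_compl]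
  -- Euler + faces
  have hdarts : Fintype.card G.Dart = 2 * m := G.dart_card_eq_twice_card_edges
  have h5F : 5 * E.faceCount ≤ 2 * m := by
    rw [← hdarts]
    exact E.five_mul_faceCount_le fun d => E.faceSize_ge_five hδ hgirth (hface d)
  have hV : Nat.card V = A.card + B.card := by
    rw [Nat.card_eq_fintype_card, hB, ← Finset.card_add_card_compl A]
  have hEdge : Nat.card G.edgeSet = m := by
    rw [hm, edgeFinset, Set.toFinset_card, Nat.card_eq_fintype_card]
  rw [PlaneEmbedding.EulerFormula, hV, hEdge] at hE
  push_cast at hE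
  omega
end
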